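/- Let k be odd, m = 2k, q = 2^m, d = (2^{lk}+1)/(2^l+1) for odd l coprime to k with 0 < l < k, and define S(a) = ∑_{x ∈ GF(q)} (-1)^{Tr_m(x^d + ax)}. Then ∑_{a ∈ GF(q)*} S(a) = (2^k+1)·2^{k+1}/3. -/

import Mathlib

/-!
Summing `S(a)` over all `a ∈ GF(q)` gives `q`, because for `x ≠ 0` the sum over `a` of
`(-1)^Tr(a x)` vanishes; so everything comes down to `S(0) = ∑ₓ (-1)^Tr(x^d)`.
On `GF(q)*` the map `x ↦ x^d` is `G`-to-one onto the subgroup of order `(q - 1) / G`, where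
`G = gcd(d, q - 1) = (2^k + 1) / 3`; the factor `3` is forced by a `3`-adic valuation count,
which shows that `2^k + 1 ∤ d`. That subgroup is `μ₃ · GF(2^k)*`. The trace vanishes on the
subfield `GF(2^k)`, while for a primitive cube root of unity `w` the character
`x ↦ (-1)^Tr(w x)` is nontrivial on `GF(2^k)`, as `Tr(w (y + y^(2^k))) = Tr(y)`.
Hence `S(0) = 1 + G (2^k - 3)`.
-/

open Finset

section NumberTheory

theorem Nat.Prime.mul_eq_of_dvd_of_dvd_mul {p g b : ℕ} (hp : p.Prime) (hgb : g ∣ b)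
    (hbg : b ∣ p * g) (hnot : ¬ b ∣ g) : p * g = b := by
  obtain ⟨s, rfl⟩ := hgb
  have hg : g ≠ 0 := by rintro rfl; simp at hnot
  have hs : s ∣ p := by
    rwa [mul_comm p, Nat.mul_dvd_mul_iff_left (Nat.pos_of_ne_zero hg)] at hbg
  rcases hp.eq_one_or_self_of_dvd s hs with rfl | rfl
  · simp at hnot
  · ring

theorem two_pow_two_mul_sub_one (n : ℕ) : 2 ^ (2 * n) - 1 = (2 ^ n + 1) * (2 ^ n - 1) := by
  rw [mul_comm, pow_mul, ← Nat.sq_sub_sq, one_pow]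

theorem two_pow_mod_three {k : ℕ} (hk : Odd k) : 2 ^ k % 3 = 2 := by
  obtain ⟨j, rfl⟩ := hk
  rw [pow_succ, pow_mul, Nat.mul_mod, Nat.pow_mod]
  norm_num

theorem padicValNat_three_two_pow_add_one {k : ℕ} (hk : Odd k) :
    padicValNat 3 (2 ^ k + 1) = 1 + padicValNat 3 k := by
  simpa using padicValNat.pow_add_pow (p := 3) (x := 2) (y := 1) (by decide) (by decide)
    (by decide) hk

variable {k l d : ℕ}

theorem padicValNat_three_of_mul_two_pow_add_one (hk : Odd k) (hl : Odd l)
    (hd : d * (2 ^ l + 1) = 2 ^ (l * k) + 1) : padicValNat 3 d = padicValNat 3 k := by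
  have h3 : ¬ 3 ∣ 2 ^ l := fun h => by have := Nat.prime_three.dvd_of_dvd_pow h; omega
  have hval := padicValNat.pow_add_pow (p := 3) (x := 2 ^ l) (y := 1) (by decide)
    (by simpa using hl.nat_add_dvd_pow_add_pow 2 1) h3 hk
  have hd0 : d ≠ 0 := by rintro rfl; simp at hd
  rw [one_pow, ← pow_mul, ← hd, padicValNat.mul hd0 (by positivity)] at hval
  omega

theorem two_pow_add_one_not_dvd (hk : Odd k) (hl : Odd l)
    (hd : d * (2 ^ l + 1) = 2 ^ (l * k) + 1) : ¬ 2 ^ k + 1 ∣ d := by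
  intro h
  have hd0 : d ≠ 0 := by rintro rfl; simp at hd
  have := (padicValNat_dvd_iff_le (p := 3) hd0).1 (pow_padicValNat_dvd.trans h)
  rw [padicValNat_three_two_pow_add_one hk,
    padicValNat_three_of_mul_two_pow_add_one hk hl hd] at this
  omega

theorem gcd_two_pow_sub_one_two_pow_add_one_dvd_three (hco : k.Coprime l) :
    Nat.gcd (2 ^ (2 * k) - 1) (2 ^ l + 1) ∣ 3 := by
  calc Nat.gcd (2 ^ (2 * k) - 1) (2 ^ l + 1) ∣ Nat.gcd (2 ^ (2 * k) - 1) (2 ^ (2 * l) - 1) :=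
        Nat.gcd_dvd_gcd_of_dvd_right _ (two_pow_two_mul_sub_one l ▸ dvd_mul_right _ _)
    _ = 3 := by rw [Nat.pow_sub_one_gcd_pow_sub_one, Nat.gcd_mul_left, hco]; rfl

theorem gcd_dvd_two_pow_add_one (hl : Odd l) (hd : d * (2 ^ l + 1) = 2 ^ (l * k) + 1) :
    Nat.gcd (2 ^ (2 * k) - 1) d ∣ 2 ^ k + 1 := by
  obtain ⟨s, rfl⟩ := hl
  have hmod : 2 ^ ((2 * s + 1) * k) + 1 ≡ 2 ^ k + 1 [MOD 2 ^ (2 * k) - 1] := by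
    have h1 : 2 ^ (2 * k) ≡ 1 [MOD 2 ^ (2 * k) - 1] := Nat.modEq_sub Nat.one_le_two_pow
    have := (h1.pow s).mul_right (2 ^ k) |>.add_right 1
    rw [one_pow, one_mul, ← pow_mul, ← pow_add] at this
    convert this using 3
    ring
  exact (hmod.dvd_iff (Nat.gcd_dvd_left _ _)).1
    ((Nat.gcd_dvd_right _ _).trans (hd ▸ dvd_mul_right _ _))

theorem three_mul_gcd_two_pow_sub_one (hk : Odd k) (hl : Odd l) (hco : k.Coprime l)
    (hd : d * (2 ^ l + 1) = 2 ^ (l * k) + 1) :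
    3 * Nat.gcd (2 ^ (2 * k) - 1) d = 2 ^ k + 1 := by
  refine Nat.prime_three.mul_eq_of_dvd_of_dvd_mul (gcd_dvd_two_pow_add_one hl hd) ?_
    fun h => two_pow_add_one_not_dvd hk hl hd (h.trans (Nat.gcd_dvd_right _ _))
  have hlk : 2 ^ k + 1 ∣ d * (2 ^ l + 1) := by
    rw [hd, mul_comm l]
    simpa [← pow_mul] using hl.nat_add_dvd_pow_add_pow (2 ^ k) 1
  calc 2 ^ k + 1 ∣ Nat.gcd (2 ^ (2 * k) - 1) (d * (2 ^ l + 1)) :=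
        Nat.dvd_gcd (two_pow_two_mul_sub_one k ▸ dvd_mul_right _ _) hlk
    _ ∣ Nat.gcd (2 ^ (2 * k) - 1) d * Nat.gcd (2 ^ (2 * k) - 1) (2 ^ l + 1) :=
        gcd_mul_dvd_mul_gcd _ _ _
    _ ∣ Nat.gcd (2 ^ (2 * k) - 1) d * 3 :=
        mul_dvd_mul_left _ (gcd_two_pow_sub_one_two_pow_add_one_dvd_three hco)
    _ = 3 * Nat.gcd (2 ^ (2 * k) - 1) d := mul_comm _ _

end NumberTheory

theorem MonoidHom.sum_comp_eq_card_ker_nsmul {G H M : Type*} [Group G] [Group H] [Fintype G]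
    [DecidableEq H] [AddCommMonoid M] (φ : G →* H) (f : H → M) :
    ∑ x, f (φ x) = Nat.card φ.ker • ∑ y ∈ univ.image φ, f y := by
  rw [Finset.sum_comp, Finset.smul_sum]
  refine Finset.sum_congr rfl fun y hy => ?_
  obtain ⟨a, -, rfl⟩ := Finset.mem_image.1 hy
  congr 1
  rw [← Nat.card_congr (φ.fiberEquivKer a)]
  simp [Set.preimage, Nat.card_eq_fintype_card, Fintype.card_subtype]

section Cyclic

variable {α : Type*} [CommGroup α] [Fintype α] [DecidableEq α] [IsCyclic α]

theorem IsCyclic.card_image_pow (d : ℕ) :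
    #(univ.image fun x : α => x ^ d) = Nat.card α / (Nat.card α).gcd d := by
  rw [← IsCyclic.card_powMonoidHom_range α d, ← Set.toFinset_range,
    ← Nat.card_eq_card_toFinset]
  rfl

theorem IsCyclic.image_pow_eq_filter (d : ℕ) :
    univ.image (fun x : α => x ^ d) =
      ({y | y ^ (Nat.card α / (Nat.card α).gcd d) = 1} : Finset α) := by
  have hpos : 0 < Nat.card α / (Nat.card α).gcd d :=
    Nat.div_pos (Nat.gcd_le_left _ Nat.card_pos) (Nat.gcd_pos_of_pos_left _ Nat.card_pos)
  refine Finset.eq_of_subset_of_card_le (fun y hy => ?_) ?_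
  · obtain ⟨x, -, rfl⟩ := Finset.mem_image.1 hy
    rw [Finset.mem_filter, ← pow_mul, mul_comm, Nat.div_mul_right_comm (Nat.gcd_dvd_left _ _),
      Nat.mul_div_assoc _ (Nat.gcd_dvd_right _ _), pow_mul, pow_card_eq_one', one_pow]
    exact ⟨mem_univ _, rfl⟩
  · rw [IsCyclic.card_image_pow]
    exact IsCyclic.card_pow_eq_one_le hpos

theorem IsCyclic.card_filter_pow_eq_one {t : ℕ} (ht : t ∣ Nat.card α) :
    #{y : α | y ^ t = 1} = t := by
  have h := IsCyclic.card_image_pow (α := α) (Nat.card α / t)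
  rwa [IsCyclic.image_pow_eq_filter, Nat.gcd_eq_right (Nat.div_dvd_of_dvd ht),
    Nat.div_div_self ht Nat.card_pos.ne'] at h

theorem IsCyclic.sum_comp_pow {M : Type*} [AddCommMonoid M] (f : α → M) (d : ℕ) :
    ∑ x, f (x ^ d) = (Nat.card α).gcd d •
      ∑ y with y ^ (Nat.card α / (Nat.card α).gcd d) = 1, f y := by
  rw [← IsCyclic.image_pow_eq_filter, ← IsCyclic.card_powMonoidHom_ker α d]
  exact (powMonoidHom d).sum_comp_eq_card_ker_nsmul f

end Cyclic

theorem sum_pow_mul_eq_one_of_coprime {α M : Type*} [CommGroup α] [Fintype α] [DecidableEq α]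
    [AddCommMonoid M] {a b : ℕ} (hab : a.Coprime b) (f : α → M) :
    ∑ y with y ^ (a * b) = 1, f y = ∑ w with w ^ a = 1, ∑ z with z ^ b = 1, f (w * z) := by
  obtain ⟨c₁, h₁a, h₁b⟩ := Nat.chineseRemainder hab 1 0
  obtain ⟨c₂, h₂a, h₂b⟩ := Nat.chineseRemainder hab 0 1
  have hc : c₁ + c₂ ≡ 1 [MOD a * b] := (Nat.modEq_and_modEq_iff_modEq_mul hab).1
    ⟨by simpa using h₁a.add h₂a, by simpa using h₁b.add h₂b⟩
  rw [← Finset.sum_product']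
  symm
  refine Finset.sum_nbij' (fun p => p.1 * p.2) (fun y => (y ^ c₁, y ^ c₂)) ?_ ?_ ?_ ?_
    (fun _ _ => rfl)
  · rintro ⟨w, z⟩ hwz
    simp only [mem_product, mem_filter, mem_univ, true_and] at hwz ⊢
    rw [mul_pow, pow_mul, hwz.1, mul_comm a b, pow_mul, hwz.2, one_pow, one_pow, one_mul]
  · intro y hy
    simp only [mem_product, mem_filter, mem_univ, true_and] at hy ⊢
    constructor
    · rw [← pow_mul, mul_comm, pow_eq_pow_of_modEq (h₁b.mul_left' a) hy, mul_zero, pow_zero]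
    · rw [← pow_mul, mul_comm, pow_eq_pow_of_modEq (h₂a.mul_left' b) (by rwa [mul_comm]),
        mul_zero, pow_zero]
  · rintro ⟨w, z⟩ hwz
    simp only [mem_product, mem_filter, mem_univ, true_and] at hwz
    rw [Prod.mk.injEq, mul_pow, mul_pow, pow_eq_pow_of_modEq h₁a hwz.1,
      pow_eq_pow_of_modEq h₁b hwz.2, pow_eq_pow_of_modEq h₂a hwz.1,
      pow_eq_pow_of_modEq h₂b hwz.2]
    simp
  · intro y hy
    simp only [mem_filter, mem_univ, true_and] at hy
    rw [← pow_add, pow_eq_pow_of_modEq hc hy, pow_one]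

section Units

variable {K M : Type*} [Field K] [Fintype K] [DecidableEq K] [AddCommMonoid M]

theorem sum_units_pow_eq_one (f : K → M) (n : ℕ) :
    ∑ z : Kˣ with z ^ n = 1, f z =
      ∑ x ∈ ({x | x ^ (n + 1) = x} : Finset K).erase 0, f x := by
  refine Finset.sum_bij' (fun z _ => (z : K)) (fun x hx => Units.mk0 x (mem_erase.1 hx).1)
    (fun z hz => ?_) (fun x hx => ?_) (fun _ _ => Units.ext rfl) (fun _ _ => rfl)
    (fun _ _ => rfl)
  · simp only [mem_filter, mem_univ, true_and, mem_erase] at hz ⊢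
    refine ⟨z.ne_zero, ?_⟩
    rw [pow_succ, ← Units.val_pow_eq_pow_val, hz, Units.val_one, one_mul]
  · simp only [mem_filter, mem_univ, true_and, mem_erase] at hx ⊢
    refine Units.ext ?_
    rw [Units.val_pow_eq_pow_val, Units.val_mk0, Units.val_one]
    exact (mul_eq_right₀ hx.1).1 (by rw [← pow_succ, hx.2])

theorem Fintype.sum_eq_add_sum_units (f : K → M) : ∑ x, f x = f 0 + ∑ u : Kˣ, f u := by
  have h := sum_units_pow_eq_one f 0
  simp only [pow_zero, zero_add, pow_one, filter_true] at h
  rw [h, Finset.add_sum_erase _ _ (mem_univ 0)]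

end Units

theorem AddChar.sum_eq_zero_of_add_mem_iff {A R : Type*} [AddGroup A] [CommRing R] [IsDomain R]
    (ψ : AddChar A R) {s : Finset A} {a : A} (hs : ∀ x, x + a ∈ s ↔ x ∈ s)
    (ha : ψ a ≠ 1) :
    ∑ x ∈ s, ψ x = 0 := by
  refine eq_zero_of_mul_eq_self_right ha ?_
  rw [Finset.sum_mul]
  simp_rw [← AddChar.map_add_eq_mul]
  exact Finset.sum_equiv (Equiv.addRight a) (fun x => (hs x).symm) (fun _ _ => rfl)

theorem AddChar.sum_sum_add_mul {R R' : Type*} [CommRing R] [Fintype R] [DecidableEq R]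
    [CommRing R'] [IsDomain R'] {ψ : AddChar R R'} (hψ : ψ.IsPrimitive) (g : R → R)
    (hg : g 0 = 0) : ∑ a, ∑ x, ψ (g x + a * x) = Fintype.card R := by
  rw [Finset.sum_comm]
  simp_rw [AddChar.map_add_eq_mul, ← Finset.mul_sum, AddChar.sum_mulShift _ hψ]
  simp [hg]

theorem FiniteField.trace_pow_card_pow {K L : Type*} [Field K] [Fintype K] [Field L]
    [Algebra K L] [Algebra.IsAlgebraic K L] (x : L) (n : ℕ) :
    Algebra.trace K L (x ^ Fintype.card K ^ n) = Algebra.trace K L x := by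
  rw [← Algebra.trace_eq_of_algEquiv (FiniteField.frobeniusAlgEquivOfAlgebraic K L ^ n) x,
    AlgEquiv.coe_pow, FiniteField.coe_frobeniusAlgEquivOfAlgebraic_iterate]

section CharTwo

variable {F : Type*} [Field F] [Algebra (ZMod 2) F]

variable (F) in
noncomputable def traceSign : AddChar F ℤ where
  toFun x := if Algebra.trace (ZMod 2) F x = 0 then 1 else -1
  map_zero_eq_one' := by simp
  map_add_eq_mul' x y := by
    rw [map_add]
    generalize Algebra.trace (ZMod 2) F x = a
    generalize Algebra.trace (ZMod 2) F y = b
    revert a b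
    decide

theorem traceSign_apply (x : F) :
    traceSign F x = if Algebra.trace (ZMod 2) F x = 0 then 1 else -1 := rfl

theorem traceSign_eq_neg_one_of_trace_eq_one {x : F} (hx : Algebra.trace (ZMod 2) F x = 1) :
    traceSign F x = -1 := by
  simp [traceSign_apply, hx]

variable [Fintype F] {k : ℕ}

theorem trace_two_pow (x : F) (n : ℕ) :
    Algebra.trace (ZMod 2) F (x ^ 2 ^ n) = Algebra.trace (ZMod 2) F x := by
  simpa using FiniteField.trace_pow_card_pow (K := ZMod 2) x n

theorem exists_trace_eq_one : ∃ y : F, Algebra.trace (ZMod 2) F y = 1 :=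
  Algebra.trace_surjective (ZMod 2) F 1

theorem traceSign_isPrimitive : (traceSign F).IsPrimitive := by
  intro a ha h
  obtain ⟨y, hy⟩ := exists_trace_eq_one (F := F)
  have := DFunLike.congr_fun h (a⁻¹ * y)
  rw [AddChar.mulShift_apply, ← mul_assoc, mul_inv_cancel₀ ha, one_mul,
    traceSign_eq_neg_one_of_trace_eq_one hy, AddChar.one_apply] at this
  exact absurd this (by decide)

theorem trace_eq_zero_of_pow_eq_self (hF : Fintype.card F = 2 ^ (2 * k)) {x : F}
    (hx : x ^ 2 ^ k = x) : Algebra.trace (ZMod 2) F x = 0 := by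
  have : CharP F 2 := charP_of_injective_algebraMap' (ZMod 2) 2
  have hrank : Module.finrank (ZMod 2) F = k + k := by
    rw [Module.card_eq_pow_finrank (K := ZMod 2), ZMod.card] at hF
    rw [← two_mul]
    exact Nat.pow_right_injective le_rfl hF
  apply FaithfulSMul.algebraMap_injective (ZMod 2) F
  rw [FiniteField.algebraMap_trace_eq_sum_pow, hrank, Finset.sum_range_add, map_zero]
  simp_rw [Nat.card_zmod, pow_add, pow_mul, hx]
  exact CharTwo.add_self_eq_zero _

theorem traceSign_eq_one_of_pow_eq_self (hF : Fintype.card F = 2 ^ (2 * k)) {x : F}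
    (hx : x ^ 2 ^ k = x) : traceSign F x = 1 := by
  rw [traceSign_apply, if_pos (trace_eq_zero_of_pow_eq_self hF hx)]

variable [DecidableEq F]

theorem sum_traceSign_mul_eq_zero (hF : Fintype.card F = 2 ^ (2 * k)) {w : F}
    (hw : w ^ 2 + w = 1) (hwk : (w ^ 2) ^ 2 ^ k = w) :
    ∑ x with x ^ 2 ^ k = x, traceSign F (w * x) = 0 := by
  have : CharP F 2 := charP_of_injective_algebraMap' (ZMod 2) 2
  -- the shift `y + y ^ 2 ^ k` lies in the subfield, and `Tr (w (y + y ^ 2 ^ k)) = Tr y = 1`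
  obtain ⟨y, hy⟩ := exists_trace_eq_one (F := F)
  have hyy : (y ^ 2 ^ k) ^ 2 ^ k = y := by
    rw [← pow_mul, ← pow_add, ← two_mul, ← hF, FiniteField.pow_card]
  refine AddChar.sum_eq_zero_of_add_mem_iff ((traceSign F).mulShift w) (a := y + y ^ 2 ^ k)
    (fun x => ?_) ?_
  · simp only [mem_filter, mem_univ, true_and, add_pow_char_pow, hyy]
    constructor
    · intro h
      rw [add_comm (y ^ 2 ^ k) y] at h
      exact add_right_cancel h
    · intro h
      rw [h, add_comm y]
  · have hshift : w * (y + y ^ 2 ^ k) = w * y + (w ^ 2 * y) ^ 2 ^ k := by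
      rw [mul_pow, hwk]
      ring
    rw [AddChar.mulShift_apply, traceSign_eq_neg_one_of_trace_eq_one]
    · decide
    · rw [hshift, map_add, trace_two_pow, ← map_add, ← add_mul, add_comm, hw, one_mul, hy]

theorem sum_units_traceSign (hF : Fintype.card F = 2 ^ (2 * k)) :
    ∑ z : Fˣ with z ^ (2 ^ k - 1) = 1, traceSign F z = 2 ^ k - 1 := by
  have hterm : ∀ z ∈ ({z : Fˣ | z ^ (2 ^ k - 1) = 1} : Finset Fˣ), traceSign F z = 1 := by
    intro z hz
    rw [mem_filter] at hz
    refine traceSign_eq_one_of_pow_eq_self hF ?_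
    rw [← Units.val_pow_eq_pow_val, ← Nat.sub_add_cancel (Nat.one_le_two_pow (n := k)),
      pow_succ, hz.2, one_mul]
  have hcard : #{z : Fˣ | z ^ (2 ^ k - 1) = 1} = 2 ^ k - 1 :=
    IsCyclic.card_filter_pow_eq_one (by
      rw [Nat.card_units, Nat.card_eq_fintype_card, hF, two_pow_two_mul_sub_one]
      exact dvd_mul_left _ _)
  rw [Finset.sum_congr rfl hterm, sum_const, hcard, nsmul_eq_mul, mul_one,
    Nat.cast_sub Nat.one_le_two_pow]
  push_cast
  ring

theorem sum_units_traceSign_mul (hk : Odd k) (hF : Fintype.card F = 2 ^ (2 * k)) {w : Fˣ}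
    (hw3 : w ^ 3 = 1) (hw1 : w ≠ 1) :
    ∑ z : Fˣ with z ^ (2 ^ k - 1) = 1, traceSign F (w * z) = -1 := by
  have : CharP F 2 := charP_of_injective_algebraMap' (ZMod 2) 2
  have hw : (w : F) ^ 2 + w = 1 := by
    have h3 : ((w : F) - 1) * ((w : F) ^ 2 + w + 1) = 0 := by
      have := congrArg Units.val hw3
      push_cast at this
      linear_combination this
    have hw1' : (w : F) - 1 ≠ 0 := sub_ne_zero.2 (Units.val_eq_one.not.2 hw1)
    linear_combination (mul_eq_zero.1 h3).resolve_left hw1' - CharTwo.add_self_eq_zero (1 : F)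
  have hwk : ((w : F) ^ 2) ^ 2 ^ k = w := by
    rw [← pow_mul, ← Units.val_pow_eq_pow_val, pow_eq_pow_of_modEq _ hw3, pow_one]
    have := two_pow_mod_three hk
    show _ % 3 = 1 % 3
    omega
  have hK := sum_traceSign_mul_eq_zero hF hw hwk
  rw [← Finset.add_sum_erase _ _ (by simp : (0 : F) ∈ ({x | x ^ 2 ^ k = x} : Finset F)),
    mul_zero, AddChar.map_zero_eq_one, ← Nat.sub_add_cancel (Nat.one_le_two_pow (n := k)),
    ← sum_units_pow_eq_one (fun x => traceSign F (w * x))] at hK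
  linarith

theorem sum_traceSign_pow_eq_one (hk : Odd k) (hF : Fintype.card F = 2 ^ (2 * k)) :
    ∑ y : Fˣ with y ^ (3 * (2 ^ k - 1)) = 1, traceSign F y = 2 ^ k - 3 := by
  have h2k := two_pow_mod_three hk
  have hcop : Nat.Coprime 3 (2 ^ k - 1) := by
    rw [Nat.Prime.coprime_iff_not_dvd Nat.prime_three]
    have := Nat.one_le_two_pow (n := k)
    omega
  have hμ3 : #{y : Fˣ | y ^ 3 = 1} = 3 :=
    IsCyclic.card_filter_pow_eq_one (by
      rw [Nat.card_units, Nat.card_eq_fintype_card, hF, two_pow_two_mul_sub_one]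
      exact (by omega : 3 ∣ 2 ^ k + 1).mul_right _)
  have hne : ∀ w ∈ ({w : Fˣ | w ^ 3 = 1} : Finset Fˣ).erase 1,
      ∑ z : Fˣ with z ^ (2 ^ k - 1) = 1, traceSign F ((w * z : Fˣ) : F) = -1 := by
    intro w hw
    rw [mem_erase, mem_filter] at hw
    simpa using sum_units_traceSign_mul hk hF hw.2.2 hw.1
  rw [sum_pow_mul_eq_one_of_coprime hcop,
    ← Finset.add_sum_erase _ _ (by simp : (1 : Fˣ) ∈ ({w : Fˣ | w ^ 3 = 1} : Finset Fˣ)),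
    Finset.sum_congr rfl hne]
  simp [Finset.card_erase_of_mem, hμ3, sum_units_traceSign hF]
  ring

end CharTwo

theorem first_moment_S_general (k l : ℕ) (hk : Odd k) (hl : Odd l)
    (hco : Nat.Coprime k l)
    (F : Type) [Field F] [Fintype F] [DecidableEq F] [Algebra (ZMod 2) F]
    (hF : Fintype.card F = 2 ^ (2 * k))
    (d : ℕ) (hd : d = (2 ^ (l * k) + 1) / (2 ^ l + 1)) :
    3 * ∑ a ∈ Finset.univ.erase (0 : F),
        ∑ x : F, (if Algebra.trace (ZMod 2) F (x ^ d + a * x) = 0 then (1 : ℤ) else -1)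
      = (2 ^ k + 1) * 2 ^ (k + 1) := by
  have hde : d * (2 ^ l + 1) = 2 ^ (l * k) + 1 := by
    rw [hd]
    exact Nat.div_mul_cancel (by simpa [← pow_mul] using hk.nat_add_dvd_pow_add_pow (2 ^ l) 1)
  have hd0 : d ≠ 0 := by rintro rfl; simp at hde
  have hG := three_mul_gcd_two_pow_sub_one hk hl hco hde
  set G := Nat.gcd (2 ^ (2 * k) - 1) d
  have hquot : (2 ^ (2 * k) - 1) / G = 3 * (2 ^ k - 1) :=
    Nat.div_eq_of_eq_mul_left (Nat.pos_of_ne_zero fun h => by simp [h] at hG)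
      (by rw [two_pow_two_mul_sub_one, ← hG]; ring)
  have hS0 : ∑ x : F, traceSign F (x ^ d) = 1 + G * (2 ^ k - 3) := by
    rw [Fintype.sum_eq_add_sum_units, zero_pow hd0, AddChar.map_zero_eq_one]
    simp_rw [← Units.val_pow_eq_pow_val]
    rw [IsCyclic.sum_comp_pow (fun y : Fˣ => traceSign F y), Nat.card_units,
      Nat.card_eq_fintype_card, hF, hquot, sum_traceSign_pow_eq_one hk hF, nsmul_eq_mul]
  have hall := AddChar.sum_sum_add_mul traceSign_isPrimitive (· ^ d) (zero_pow (M₀ := F) hd0)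
  change 3 * ∑ a ∈ univ.erase 0, ∑ x, traceSign F (x ^ d + a * x) = _
  rw [Finset.sum_erase_eq_sub (mem_univ 0), hall]
  simp only [zero_mul, add_zero, hS0, hF]
  have hGz : (3 : ℤ) * G = 2 ^ k + 1 := by exact_mod_cast hG
  push_cast
  linear_combination (3 - (2 : ℤ) ^ k) * hGz

theorem first_moment_S (k l : ℕ) (hk : Odd k) (hl : Odd l) (hl0 : 0 < l) (hlk : l < k)
    (hco : Nat.Coprime k l)
    (F : Type) [Field F] [Fintype F] [DecidableEq F] [Algebra (ZMod 2) F]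
    (hF : Fintype.card F = 2 ^ (2 * k))
    (d : ℕ) (hd : d = (2 ^ (l * k) + 1) / (2 ^ l + 1)) :
    3 * ∑ a ∈ Finset.univ.erase (0 : F),
        ∑ x : F, (if Algebra.trace (ZMod 2) F (x ^ d + a * x) = 0 then (1 : ℤ) else -1)
      = (2 ^ k + 1) * 2 ^ (k + 1) :=
  first_moment_S_general k l hk hl hco F hF d hd
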